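/- For messages a₁,…,a_n, b₁,…,b_m and any shuffle τ of !?a₁⋯!?a_n with !?b₁⋯!?b_m, for every peer i there exists a shuffle c₁⋯c_{n+m} of the word a₁⋯a_n with b₁⋯b_m such that the projection of τ onto peer i equals the projection of !?c₁⋯!?c_{n+m} onto peer i. -/
import Mathlib


/-! Communicating finite state machines: messages, traces, systems. -/

structure MessageSet where
  msgs : Finset ℕ
  p : ℕ
  src : ℕ → ℕ
  dst : ℕ → ℕ

def MessageSet.WF (M : MessageSet) : Prop :=
  1 ≤ M.p ∧ ∀ a ∈ M.msgs, M.src a ≠ M.dst a ∧ M.src a < M.p ∧ M.dst a < M.p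

inductive Act where
  | send (a : ℕ)
  | recv (a : ℕ)
deriving DecidableEq

abbrev Trace := List Act

def Act.msg : Act → ℕ
  | .send a => a
  | .recv a => a

def peerOf (M : MessageSet) : Act → ℕ
  | .send a => M.src a
  | .recv a => M.dst a

/-- Send projection: the sequence of messages sent in a trace. -/
def sendProj (τ : Trace) : List ℕ :=
  τ.filterMap (fun α => match α with | .send a => some a | .recv _ => none)

/-- Projection of a trace on the actions of peer `i`. -/
def projPeer (M : MessageSet) (i : ℕ) (τ : Trace) : Trace :=
  τ.filter (fun α => peerOf M α = i)

def sentOn (M : MessageSet) (i j : ℕ) (τ : Trace) : List ℕ :=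
  τ.filterMap (fun α => match α with
    | .send a => if M.src a = i ∧ M.dst a = j then some a else none
    | .recv _ => none)

def recvOn (M : MessageSet) (i j : ℕ) (τ : Trace) : List ℕ :=
  τ.filterMap (fun α => match α with
    | .recv a => if M.src a = i ∧ M.dst a = j then some a else none
    | .send _ => none)

/-- A trace is FIFO if on every channel, in every prefix, the receives form a
prefix of the sends. -/
def Fifo (M : MessageSet) (τ : Trace) : Prop :=
  ∀ τ', τ' <+: τ → ∀ i j, recvOn M i j τ' <+: sentOn M i j τ'

/-- `k`-bounded FIFO trace: the buffer of each channel never exceeds `k`. -/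
def BoundedFifo (M : MessageSet) (k : ℕ) (τ : Trace) : Prop :=
  Fifo M τ ∧ ∀ τ', τ' <+: τ → ∀ i j,
    (sentOn M i j τ').length ≤ (recvOn M i j τ').length + k

/-- `!?a₁ ⬝ !?a₂ ⋯ !?aₙ` -/
def syncOf (l : List ℕ) : Trace := l.flatMap (fun a => [Act.send a, Act.recv a])

def Synchronous (τ : Trace) : Prop := ∃ l : List ℕ, τ = syncOf l

def CausalEquiv (M : MessageSet) (τ₁ τ₂ : Trace) : Prop :=
  Fifo M τ₁ ∧ Fifo M τ₂ ∧ ∀ i, projPeer M i τ₁ = projPeer M i τ₂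

/-- A system of communicating machines: for each peer `i`, an initial state and
a transition relation (all states are accepting). -/
structure System where
  init : ℕ → ℕ
  delta : ℕ → ℕ → Act → ℕ → Prop

/-- Well-formedness: peer `i` performs only actions of peer `i`, on messages of `M`. -/
def System.WF (S : System) (M : MessageSet) : Prop :=
  ∀ i q α q', S.delta i q α q' → peerOf M α = i ∧ α.msg ∈ M.msgs

/-- The machines are finite-state. -/
def System.FiniteDelta (S : System) : Prop :=
  Set.Finite {x : ℕ × ℕ × Act × ℕ | S.delta x.1 x.2.1 x.2.2.1 x.2.2.2}

/-- A configuration: local states, and one FIFO buffer per channel `(i,j)`. -/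
abbrev Config := (ℕ → ℕ) × (ℕ → ℕ → List ℕ)

def Stable (c : Config) : Prop := ∀ i j, c.2 i j = []

def Step (M : MessageSet) (S : System) (c : Config) : Act → Config → Prop
  | .send a, c' =>
      S.delta (M.src a) (c.1 (M.src a)) (.send a) (c'.1 (M.src a)) ∧
      (∀ k, k ≠ M.src a → c'.1 k = c.1 k) ∧
      c'.2 (M.src a) (M.dst a) = c.2 (M.src a) (M.dst a) ++ [a] ∧
      (∀ k l, ¬(k = M.src a ∧ l = M.dst a) → c'.2 k l = c.2 k l)
  | .recv a, c' =>
      S.delta (M.dst a) (c.1 (M.dst a)) (.recv a) (c'.1 (M.dst a)) ∧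
      (∀ k, k ≠ M.dst a → c'.1 k = c.1 k) ∧
      c.2 (M.src a) (M.dst a) = a :: c'.2 (M.src a) (M.dst a) ∧
      (∀ k l, ¬(k = M.src a ∧ l = M.dst a) → c'.2 k l = c.2 k l)

inductive Exec (M : MessageSet) (S : System) : Config → Trace → Config → Prop
  | refl (c : Config) : Exec M S c [] c
  | step {c c' c'' : Config} {α : Act} {τ : Trace} :
      Step M S c α c' → Exec M S c' τ c'' → Exec M S c (α :: τ) c''

def initConfig (S : System) : Config := (S.init, fun _ _ => [])

def TraceOf (M : MessageSet) (S : System) (τ : Trace) : Prop :=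
  ∃ c, Exec M S (initConfig S) τ c

/-- `Trk M S 0` = synchronous traces; `Trk M S k` (`k ≥ 1`) = `k`-bounded traces. -/
def Trk (M : MessageSet) (S : System) : ℕ → Trace → Prop
  | 0, τ => TraceOf M S τ ∧ Synchronous τ
  | (k+1), τ => TraceOf M S τ ∧ BoundedFifo M (k+1) τ

def Trω (M : MessageSet) (S : System) (τ : Trace) : Prop := ∃ k, Trk M S k τ

/-- Two traces are `S`-equivalent if they lead from the initial configuration to
a common configuration. -/
def SEquiv (M : MessageSet) (S : System) (τ₁ τ₂ : Trace) : Prop :=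
  ∃ c, Exec M S (initConfig S) τ₁ c ∧ Exec M S (initConfig S) τ₂ c

/-- Send-trace language. -/
def STw (M : MessageSet) (S : System) (T : Trace → Prop) : Set (List ℕ) :=
  {w | ∃ τ, T τ ∧ sendProj τ = w}

/-- Send traces enriched with the reached stable configurations. -/
def STc (M : MessageSet) (S : System) (T : Trace → Prop) :
    Set (List ℕ ⊕ List ℕ × Config) :=
  {x | (∃ τ, T τ ∧ x = Sum.inl (sendProj τ)) ∨
       (∃ τ c, T τ ∧ Exec M S (initConfig S) τ c ∧ Stable c ∧
          x = Sum.inr (sendProj τ, c))}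

def kSync (M : MessageSet) (S : System) (k : ℕ) : Prop :=
  STc M S (Trk M S 0) = STc M S (Trk M S k)

def Synchronizable (M : MessageSet) (S : System) : Prop :=
  STc M S (Trk M S 0) = STc M S (Trω M S)

def LangSync (M : MessageSet) (S : System) : Prop :=
  STw M S (Trk M S 0) = STw M S (Trω M S)

inductive Shuffle : List Act → List Act → List Act → Prop
  | nil : Shuffle [] [] []
  | left {u v w : List Act} (a : Act) : Shuffle u v w → Shuffle (a :: u) v (a :: w)
  | right {u v w : List Act} (b : Act) : Shuffle u v w → Shuffle u (b :: v) (b :: w)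

inductive NShuffle : List ℕ → List ℕ → List ℕ → Prop
  | nil : NShuffle [] [] []
  | left {u v w : List ℕ} (a : ℕ) : NShuffle u v w → NShuffle (a :: u) v (a :: w)
  | right {u v w : List ℕ} (b : ℕ) : NShuffle u v w → NShuffle u (b :: v) (b :: w)

inductive PPath (S : System) (i : ℕ) : ℕ → Trace → Prop
  | nil (q : ℕ) : PPath S i q []
  | cons {q q' : ℕ} {α : Act} {w : Trace} :
      S.delta i q α q' → PPath S i q' w → PPath S i q (α :: w)

/-- The language of peer `i` (all states accepting). -/
def Lang (S : System) (i : ℕ) : Set Trace := {w | PPath S i (S.init i) w}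

def prefCl (L : Set Trace) : Set Trace := {w | ∃ v ∈ L, w <+: v}

def OrientedRing (M : MessageSet) : Prop :=
  1 ≤ M.p ∧ ∀ i j, (∃ a ∈ M.msgs, M.src a = i ∧ M.dst a = j) ↔
    (i < M.p ∧ j = (i + 1) % M.p)

/-- Shuffles commute with filtering. -/
lemma Shuffle.filter (p : Act → Bool) {u v w : List Act} (h : Shuffle u v w) :
    Shuffle (u.filter p) (v.filter p) (w.filter p) := by
  induction h with
  | nil => simpa using Shuffle.nil
  | left a _ ih =>
      by_cases hp : p a <;> simp [List.filter_cons, hp]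
      · exact Shuffle.left a ih
      · exact ih
  | right b _ ih =>
      by_cases hp : p b <;> simp [List.filter_cons, hp]
      · exact Shuffle.right b ih
      · exact ih

/-- The peer-`i` action of a message, if any. -/
def nf (M : MessageSet) (i a : ℕ) : Option Act :=
  if M.src a = i then some (.send a) else if M.dst a = i then some (.recv a) else none

lemma proj_syncOf (M : MessageSet) (i : ℕ) (l : List ℕ)
    (h : ∀ a ∈ l, M.src a ≠ M.dst a) :
    projPeer M i (syncOf l) = l.filterMap (nf M i) := by
  induction l with
  | nil => rfl
  | cons a l ih =>
      have hne : M.src a ≠ M.dst a := h a (by simp)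
      have ih' := ih (fun x hx => h x (by simp [hx]))
      simp only [syncOf, List.flatMap_cons, projPeer, List.filter_append,
        List.filterMap_cons] at *
      by_cases h1 : M.src a = i <;> by_cases h2 : M.dst a = i <;>
        simp_all [peerOf, projPeer, nf]

lemma nshuffle_id (u v : List ℕ) : NShuffle u v (u ++ v) := by
  induction u with
  | nil =>
      induction v with
      | nil => exact NShuffle.nil
      | cons b v ih => simpa using NShuffle.right b ih
  | cons a u ih => exact NShuffle.left a ih

lemma nshuffle_prepend {u v w : List ℕ} (p : List ℕ) (h : NShuffle u v w) :
    NShuffle (p ++ u) v (p ++ w) := by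
  induction p with
  | nil => exact h
  | cons a p ih => exact NShuffle.left a ih

lemma nshuffle_prepend_right {u v w : List ℕ} (p : List ℕ) (h : NShuffle u v w) :
    NShuffle u (p ++ v) (p ++ w) := by
  induction p with
  | nil => exact h
  | cons a p ih => exact NShuffle.right a ih

lemma nshuffle_mem {u v w : List ℕ} (h : NShuffle u v w) :
    ∀ x ∈ w, x ∈ u ∨ x ∈ v := by
  induction h with
  | nil => simp
  | left a _ ih =>
      intro x hx
      rcases List.mem_cons.1 hx with h | h
      · exact Or.inl (by simp [h])
      · rcases ih x h with h | h
        · exact Or.inl (by simp [h])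
        · exact Or.inr h
  | right b _ ih =>
      intro x hx
      rcases List.mem_cons.1 hx with h | h
      · exact Or.inr (by simp [h])
      · rcases ih x h with h | h
        · exact Or.inl h
        · exact Or.inr (by simp [h])

/-- Lift a shuffle of `filterMap` images back to a shuffle of the sources. -/
lemma shuffle_filterMap_lift (f : ℕ → Option Act) :
    ∀ {x y w : List Act}, Shuffle x y w → ∀ u v : List ℕ,
      u.filterMap f = x → v.filterMap f = y →
      ∃ l₃, NShuffle u v l₃ ∧ l₃.filterMap f = w := by
  intro x y w h
  induction h with
  | nil =>
      intro u v hu hv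
      exact ⟨u ++ v, nshuffle_id u v, by simp [hu, hv]⟩
  | @left x y w a _ ih =>
      intro u v hu hv
      rcases List.filterMap_eq_cons_iff.1 hu with ⟨u₀, c, u₁, rfl, h0, hc, h1⟩
      rcases ih u₁ v h1 hv with ⟨l₃, hns, hl₃⟩
      refine ⟨u₀ ++ c :: l₃, nshuffle_prepend u₀ (NShuffle.left c hns), ?_⟩
      simp [List.filterMap_append, List.filterMap_eq_nil_iff.2 h0, hc, hl₃]
  | @right x y w b _ ih =>
      intro u v hu hv
      rcases List.filterMap_eq_cons_iff.1 hv with ⟨v₀, c, v₁, rfl, h0, hc, h1⟩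
      rcases ih u v₁ hu h1 with ⟨l₃, hns, hl₃⟩
      refine ⟨v₀ ++ c :: l₃, nshuffle_prepend_right v₀ (NShuffle.right c hns), ?_⟩
      simp [List.filterMap_append, List.filterMap_eq_nil_iff.2 h0, hc, hl₃]

/-- Lemma 4.8: any shuffle of !?a₁⋯!?aₙ with !?b₁⋯!?bₘ projects,
on every peer, like !?c₁⋯!?c₍ₙ₊ₘ₎ for some shuffle c of the message words. -/
theorem shuffle_of_sync_proj (M : MessageSet) (hM : M.WF)
    (l₁ l₂ : List ℕ)
    (hmem₁ : ∀ a ∈ l₁, a ∈ M.msgs) (hmem₂ : ∀ b ∈ l₂, b ∈ M.msgs)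
    (τ : Trace) (h : Shuffle (syncOf l₁) (syncOf l₂) τ) (i : ℕ) :
    ∃ l₃, NShuffle l₁ l₂ l₃ ∧ projPeer M i τ = projPeer M i (syncOf l₃) := by
  have hne : ∀ a, a ∈ M.msgs → M.src a ≠ M.dst a := fun a ha => (hM.2 a ha).1
  have hproj := h.filter (fun α => decide (peerOf M α = i))
  rw [show (syncOf l₁).filter (fun α => decide (peerOf M α = i)) = projPeer M i (syncOf l₁) from rfl,
      show (syncOf l₂).filter (fun α => decide (peerOf M α = i)) = projPeer M i (syncOf l₂) from rfl,
      proj_syncOf M i l₁ (fun a ha => hne a (hmem₁ a ha)),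
      proj_syncOf M i l₂ (fun a ha => hne a (hmem₂ a ha))] at hproj
  rcases shuffle_filterMap_lift (nf M i) hproj l₁ l₂ rfl rfl with ⟨l₃, hns, hl₃⟩
  refine ⟨l₃, hns, ?_⟩
  rw [proj_syncOf M i l₃ ?_]
  · exact hl₃.symm
  · intro a ha
    rcases nshuffle_mem hns a ha with h' | h'
    · exact hne a (hmem₁ a h')
    · exact hne a (hmem₂ a h')
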